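/- arXiv:1211.7115 — 3 statements merged into one kernel-verified Lean document; each statement's English description precedes it below -/
import Mathlib

section
/- Suppose Δ satisfies truncation and fix p, q, r ∈ ℤ. If the Co-Borcherds identity holds at two of the three triples (p+1,q,r), (p,q+1,r), (p,q,r+1), then it also holds at the remaining triple; explicitly: (i) if it holds at (p,q+1,r) and (p,q,r+1) then it holds at (p+1,q,r); (ii) if it holds at (p+1,q,r) and (p,q,r+1) then it holds at (p,q+1,r); (iii) if it holds at (p+1,q,r) and (p,q+1,r) then it holds at (p,q,r+1). -/
open TensorProduct

noncomputable section

/-- Generalized binomial coefficient `C(p,i) = p(p-1)⋯(p-i+1)/i!` as a complex number. -/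
def cbin (p : ℤ) (i : ℕ) : ℂ :=
  (∏ k ∈ Finset.range i, ((p : ℂ) - (k : ℂ))) / (i.factorial : ℂ)

variable {V : Type*} [AddCommGroup V] [Module ℂ V]

/-- The flip `T` on `V ⊗ V`, `T (u ⊗ w) = w ⊗ u`. -/
def Tflip : V ⊗[ℂ] V →ₗ[ℂ] V ⊗[ℂ] V := (TensorProduct.comm ℂ V V).toLinearMap

/-- `T ⊗ Id` acting on `V ⊗ (V ⊗ V)` (conjugated by the associator). -/
def TId : (V ⊗[ℂ] (V ⊗[ℂ] V)) →ₗ[ℂ] (V ⊗[ℂ] (V ⊗[ℂ] V)) :=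
  (TensorProduct.assoc ℂ V V V).toLinearMap ∘ₗ
    (TensorProduct.map Tflip LinearMap.id) ∘ₗ (TensorProduct.assoc ℂ V V V).symm.toLinearMap

/-- `(Δₙ ⊗ Id) ∘ Δₘ` as a map `V → V ⊗ (V ⊗ V)` (via the associator). -/
def DL (Δ : ℤ → V →ₗ[ℂ] V ⊗[ℂ] V) (n m : ℤ) : V →ₗ[ℂ] (V ⊗[ℂ] (V ⊗[ℂ] V)) :=
  (TensorProduct.assoc ℂ V V V).toLinearMap ∘ₗ (TensorProduct.map (Δ n) LinearMap.id) ∘ₗ Δ m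

/-- `(Id ⊗ Δₙ) ∘ Δₘ` as a map `V → V ⊗ (V ⊗ V)`. -/
def DR (Δ : ℤ → V →ₗ[ℂ] V ⊗[ℂ] V) (n m : ℤ) : V →ₗ[ℂ] (V ⊗[ℂ] (V ⊗[ℂ] V)) :=
  (TensorProduct.map LinearMap.id (Δ n)) ∘ₗ Δ m

/-- Truncation: for each `v` there is `N` with `Δₙ v = 0` for all `n ≤ N`. -/
def Truncation (Δ : ℤ → V →ₗ[ℂ] V ⊗[ℂ] V) : Prop :=
  ∀ v : V, ∃ N : ℤ, ∀ n ≤ N, Δ n v = 0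

/-- `(Id ⊗ c)` composed with the canonical identification `V ⊗ ℂ ≅ V`. -/
def IdC (c : V →ₗ[ℂ] ℂ) : (V ⊗[ℂ] V) →ₗ[ℂ] V :=
  (TensorProduct.rid ℂ V).toLinearMap ∘ₗ TensorProduct.map LinearMap.id c

/-- `(c ⊗ Id)` composed with the canonical identification `ℂ ⊗ V ≅ V`. -/
def CId (c : V →ₗ[ℂ] ℂ) : (V ⊗[ℂ] V) →ₗ[ℂ] V :=
  (TensorProduct.lid ℂ V).toLinearMap ∘ₗ TensorProduct.map c LinearMap.id

/-- Divided power `D*^{(i)} = (D*)^i / i!`. -/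
def dpow (D : V →ₗ[ℂ] V) (i : ℕ) : V →ₗ[ℂ] V := ((i.factorial : ℂ)⁻¹) • (D ^ i)

/-- The Co-Borcherds identity at `(p,q,r)`. -/
def CoBorcherds (Δ : ℤ → V →ₗ[ℂ] V ⊗[ℂ] V) (p q r : ℤ) : Prop :=
  ∀ v : V,
    (∑ᶠ i : ℕ, cbin p i • DL Δ (r + i) (p + q - i) v) =
      ∑ᶠ i : ℕ, ((-1 : ℂ) ^ i * cbin r i) •
        (DR Δ (q + i) (p + r - i) v - (-1 : ℂ) ^ r • TId (DR Δ (p + i) (q + r - i) v))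

/-- Left counit: `(c ⊗ Id) ∘ Δₙ` is the identity for `n = -1` and zero otherwise. -/
def LeftCounit (Δ : ℤ → V →ₗ[ℂ] V ⊗[ℂ] V) (c : V →ₗ[ℂ] ℂ) : Prop :=
  CId c ∘ₗ Δ (-1) = LinearMap.id ∧ ∀ n : ℤ, n ≠ -1 → CId c ∘ₗ Δ n = 0

/-- Cocreation: `(Id ⊗ c) ∘ Δₙ = 0` for `n ≥ 0` and `(Id ⊗ c) ∘ Δ₋₁ = Id`. -/
def Cocreation (Δ : ℤ → V →ₗ[ℂ] V ⊗[ℂ] V) (c : V →ₗ[ℂ] ℂ) : Prop :=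
  (∀ n : ℤ, 0 ≤ n → IdC c ∘ₗ Δ n = 0) ∧ IdC c ∘ₗ Δ (-1) = LinearMap.id

/-- Exponential cocreation: `(Id ⊗ c) ∘ Δ₋₁₋ᵢ = D*^{(i)}` for all `i ≥ 0`,
and `(Id ⊗ c) ∘ Δₙ = 0` for all `n ≥ 0`. -/
def ExpCocreation (Δ : ℤ → V →ₗ[ℂ] V ⊗[ℂ] V) (c : V →ₗ[ℂ] ℂ) (D : V →ₗ[ℂ] V) : Prop :=
  (∀ i : ℕ, IdC c ∘ₗ Δ (-1 - i) = dpow D i) ∧ ∀ n : ℤ, 0 ≤ n → IdC c ∘ₗ Δ n = 0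

/-- The `D*` formula: `(D* ⊗ Id) ∘ Δ_q = -q • Δ_{q-1}`. -/
def DstFormula (Δ : ℤ → V →ₗ[ℂ] V ⊗[ℂ] V) (D : V →ₗ[ℂ] V) : Prop :=
  ∀ q : ℤ, TensorProduct.map D LinearMap.id ∘ₗ Δ q = (-(q : ℂ)) • Δ (q - 1)

/-- Coefficient Co-Skew symmetry. -/
def CoSkew (Δ : ℤ → V →ₗ[ℂ] V ⊗[ℂ] V) (D : V →ₗ[ℂ] V) : Prop :=
  ∀ (r : ℤ) (v : V),
    {i : ℕ | Δ (r + i) (dpow D i v) ≠ 0}.Finite ∧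
    Tflip (Δ r v) = ∑ᶠ i : ℕ, (-1 : ℂ) ^ (r + 1 + (i : ℤ)) • Δ (r + i) (dpow D i v)

/-- Coefficient Co-Commutator formula at `(p,q)`. -/
def CoCommutator (Δ : ℤ → V →ₗ[ℂ] V ⊗[ℂ] V) (p q : ℤ) : Prop :=
  ∀ v : V,
    (∑ᶠ i : ℕ, cbin p i • DL Δ (i : ℤ) (p + q - i) v) = DR Δ q p v - TId (DR Δ p q v)

/-- Coefficient Co-Associator formula at `(q,r)`. -/
def CoAssociator (Δ : ℤ → V →ₗ[ℂ] V ⊗[ℂ] V) (q r : ℤ) : Prop :=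
  ∀ v : V,
    DL Δ r q v =
      ∑ᶠ i : ℕ, ((-1 : ℂ) ^ i * cbin r i) •
        (DR Δ (q + i) (r - i) v - (-1 : ℂ) ^ r • TId (DR Δ (i : ℤ) (q + r - i) v))

-- auxiliary lemmas
section Aux
variable {V : Type*} [AddCommGroup V] [Module ℂ V]

lemma cbin_zero' (p : ℤ) : cbin p 0 = 1 := by simp [cbin]

lemma cbin_pascal (p : ℤ) (i : ℕ) : cbin (p+1) (i+1) = cbin p (i+1) + cbin p i := by
  unfold cbin
  rw [Finset.prod_range_succ' (fun k => (((p+1 : ℤ) : ℂ) - (k : ℂ))) i,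
      Finset.prod_range_succ (fun k => ((p : ℂ) - (k : ℂ))) i]
  have hprod : (∏ k ∈ Finset.range i, (((p+1 : ℤ) : ℂ) - ((k+1 : ℕ) : ℂ)))
      = ∏ k ∈ Finset.range i, ((p : ℂ) - (k : ℂ)) := by
    apply Finset.prod_congr rfl
    intro k _; push_cast; ring
  rw [hprod]
  have hf : ((i+1).factorial : ℂ) = (i+1) * (i.factorial : ℂ) := by
    rw [Nat.factorial_succ]; push_cast; ring
  rw [hf]
  have h1 : ((i.factorial : ℂ)) ≠ 0 := Nat.cast_ne_zero.mpr i.factorial_ne_zero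
  have h2 : ((i:ℂ)+1) ≠ 0 := by
    have := Nat.cast_ne_zero (R := ℂ).mpr (Nat.succ_ne_zero i)
    push_cast at this; simpa using this
  field_simp
  push_cast
  ring

lemma DL_zero (Δ : ℤ → V →ₗ[ℂ] V ⊗[ℂ] V) (n m : ℤ) (v : V) (h : Δ m v = 0) :
    DL Δ n m v = 0 := by simp [DL, h]

lemma DR_zero (Δ : ℤ → V →ₗ[ℂ] V ⊗[ℂ] V) (n m : ℤ) (v : V) (h : Δ m v = 0) :
    DR Δ n m v = 0 := by simp [DR, h]

lemma finsum_eq_range {A : Type*} [AddCommMonoid A] {f : ℕ → A} (K : ℕ)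
    (h : ∀ i, K ≤ i → f i = 0) : ∑ᶠ i, f i = ∑ i ∈ Finset.range K, f i := by
  apply finsum_eq_finset_sum_of_support_subset
  intro i hi
  simp only [Function.mem_support] at hi
  simp only [Finset.coe_range, Set.mem_Iio]
  by_contra hlt
  exact hi (h i (le_of_not_gt hlt))

lemma sum_shift {A : Type*} [AddCommGroup A] [Module ℂ A] (r : ℤ) (M : ℕ) (G : ℕ → A)
    (hG : G (M+1) = 0) :
    ∑ i ∈ Finset.range (M+1), ((-1:ℂ)^i * cbin (r+1) i) • G i
      = ∑ i ∈ Finset.range (M+1), ((-1:ℂ)^i * cbin r i) • (G i - G (i+1)) := by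
  rw [Finset.sum_range_succ' (fun i => ((-1:ℂ)^i * cbin (r+1) i) • G i) M]
  have step : ∀ i : ℕ, ((-1:ℂ)^(i+1) * cbin (r+1) (i+1)) • G (i+1)
      = ((-1:ℂ)^(i+1) * cbin r (i+1)) • G (i+1) - ((-1:ℂ)^i * cbin r i) • G (i+1) := by
    intro i
    rw [cbin_pascal, ← sub_smul]
    congr 1
    ring
  simp only [step]
  rw [Finset.sum_sub_distrib]
  simp only [smul_sub]
  rw [Finset.sum_sub_distrib,
      Finset.sum_range_succ' (fun i => ((-1:ℂ)^i * cbin r i) • G i) M,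
      Finset.sum_range_succ (fun i => ((-1:ℂ)^i * cbin r i) • G (i+1)) M,
      hG, smul_zero, add_zero]
  simp only [cbin_zero', pow_zero, one_mul, one_smul]
  abel

lemma claimL (Δ : ℤ → V →ₗ[ℂ] V ⊗[ℂ] V) (htr : Truncation Δ) (p q r : ℤ) (v : V) :
    (∑ᶠ i : ℕ, cbin (p+1) i • DL Δ (r + i) (p + 1 + q - i) v)
      = (∑ᶠ i : ℕ, cbin p i • DL Δ (r + i) (p + (q+1) - i) v)
        + (∑ᶠ i : ℕ, cbin p i • DL Δ (r + 1 + i) (p + q - i) v) := by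
  obtain ⟨N, hN⟩ := htr v
  set M : ℕ := (p + q + 1 - N).toNat + 1 with hM
  have hMle : p + q + 1 - N < (M : ℤ) := by
    have := Int.self_le_toNat (p + q + 1 - N)
    push_cast [hM]; omega
  have key : ∀ m : ℤ, ∀ i : ℕ, M ≤ i → m + i ≤ p + q + 1 → Δ m v = 0 := by
    intro m i hi hm
    apply hN
    have : (M:ℤ) ≤ i := by exact_mod_cast hi
    omega
  have h1 : (∑ᶠ i : ℕ, cbin (p+1) i • DL Δ (r + i) (p + 1 + q - i) v)
      = ∑ i ∈ Finset.range (M+1), cbin (p+1) i • DL Δ (r + i) (p + 1 + q - i) v := by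
    refine finsum_eq_range _ (fun i hi => ?_)
    rw [DL_zero Δ _ _ v (key _ i (by omega) (by push_cast; omega)), smul_zero]
  have h2 : (∑ᶠ i : ℕ, cbin p i • DL Δ (r + i) (p + (q+1) - i) v)
      = ∑ i ∈ Finset.range (M+1), cbin p i • DL Δ (r + i) (p + (q+1) - i) v := by
    refine finsum_eq_range _ (fun i hi => ?_)
    rw [DL_zero Δ _ _ v (key _ i (by omega) (by push_cast; omega)), smul_zero]
  have h3 : (∑ᶠ i : ℕ, cbin p i • DL Δ (r + 1 + i) (p + q - i) v)
      = ∑ i ∈ Finset.range M, cbin p i • DL Δ (r + 1 + i) (p + q - i) v := by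
    refine finsum_eq_range _ (fun i hi => ?_)
    rw [DL_zero Δ _ _ v (key _ i (by omega) (by push_cast; omega)), smul_zero]
  rw [h1, h2, h3,
      Finset.sum_range_succ' (fun i => cbin (p+1) i • DL Δ (r + i) (p + 1 + q - i) v) M,
      Finset.sum_range_succ' (fun i => cbin p i • DL Δ (r + i) (p + (q+1) - i) v) M]
  simp only [cbin_pascal, add_smul, Finset.sum_add_distrib]
  have e0 : DL Δ (r + ((0:ℕ):ℤ)) (p + (q+1) - ((0:ℕ):ℤ)) v
      = DL Δ (r + ((0:ℕ):ℤ)) (p + 1 + q - ((0:ℕ):ℤ)) v := by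
    have h : p + (q+1) - ((0:ℕ):ℤ) = p + 1 + q - ((0:ℕ):ℤ) := by ring
    rw [h]
  have e1 : ∀ i : ℕ, DL Δ (r + ((i+1 : ℕ):ℤ)) (p + (q+1) - ((i+1 : ℕ):ℤ)) v
      = DL Δ (r + ((i+1 : ℕ):ℤ)) (p + 1 + q - ((i+1 : ℕ):ℤ)) v := by
    intro i
    have h : p + (q+1) - ((i+1:ℕ):ℤ) = p + 1 + q - ((i+1:ℕ):ℤ) := by ring
    rw [h]
  have e2 : ∀ i : ℕ, DL Δ (r + 1 + (i:ℤ)) (p + q - (i:ℤ)) v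
      = DL Δ (r + ((i+1 : ℕ):ℤ)) (p + 1 + q - ((i+1 : ℕ):ℤ)) v := by
    intro i
    have ha : r + 1 + (i:ℤ) = r + ((i+1:ℕ):ℤ) := by push_cast; ring
    have hb : p + q - (i:ℤ) = p + 1 + q - ((i+1:ℕ):ℤ) := by push_cast; ring
    rw [ha, hb]
  simp only [e0, e1, e2]
  abel

lemma claimR (Δ : ℤ → V →ₗ[ℂ] V ⊗[ℂ] V) (htr : Truncation Δ) (p q r : ℤ) (v : V) :
    (∑ᶠ i : ℕ, ((-1:ℂ)^i * cbin r i) •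
        (DR Δ (q + i) (p + 1 + r - i) v
          - (-1:ℂ)^r • TId (DR Δ (p + 1 + i) (q + r - i) v)))
      = (∑ᶠ i : ℕ, ((-1:ℂ)^i * cbin r i) •
          (DR Δ (q + 1 + i) (p + r - i) v
            - (-1:ℂ)^r • TId (DR Δ (p + i) (q + 1 + r - i) v)))
        + (∑ᶠ i : ℕ, ((-1:ℂ)^i * cbin (r+1) i) •
          (DR Δ (q + i) (p + (r+1) - i) v
            - (-1:ℂ)^(r+1) • TId (DR Δ (p + i) (q + (r+1) - i) v))) := by
  obtain ⟨N, hN⟩ := htr v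
  have hB1 : p + r + 1 ≤ max (p+r+1) (q+r+1) := le_max_left _ _
  have hB2 : q + r + 1 ≤ max (p+r+1) (q+r+1) := le_max_right _ _
  set B : ℤ := max (p+r+1) (q+r+1) with hBdef
  set M : ℕ := (B - N).toNat + 1 with hM
  have hMle : B - N < (M : ℤ) := by
    have := Int.self_le_toNat (B - N)
    push_cast [hM]; omega
  have key : ∀ m : ℤ, ∀ i : ℕ, M ≤ i → m + i ≤ B → Δ m v = 0 := by
    intro m i hi hm
    apply hN
    have : (M:ℤ) ≤ i := by exact_mod_cast hi
    omega
  have hz : ((-1:ℂ)^(r+1) : ℂ) = -(-1:ℂ)^r := by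
    rw [zpow_add_one₀ (by norm_num : (-1:ℂ) ≠ 0)]; ring
  have tz : ∀ (c e : ℂ) (n m n' m' : ℤ), Δ m v = 0 → Δ m' v = 0 →
      c • (DR Δ n m v - e • TId (DR Δ n' m' v)) = 0 := by
    intro c e n m n' m' hX hY
    rw [DR_zero Δ n m v hX, DR_zero Δ n' m' v hY, map_zero, smul_zero, sub_zero, smul_zero]
  have h1 : (∑ᶠ i : ℕ, ((-1:ℂ)^i * cbin r i) •
        (DR Δ (q + i) (p + 1 + r - i) v
          - (-1:ℂ)^r • TId (DR Δ (p + 1 + i) (q + r - i) v)))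
      = ∑ i ∈ Finset.range (M+1), ((-1:ℂ)^i * cbin r i) •
        (DR Δ (q + i) (p + 1 + r - i) v
          - (-1:ℂ)^r • TId (DR Δ (p + 1 + i) (q + r - i) v)) := by
    refine finsum_eq_range _ (fun i hi => ?_)
    exact tz _ _ _ _ _ _ (key _ i (by omega) (by push_cast; omega))
      (key _ i (by omega) (by push_cast; omega))
  have h2 : (∑ᶠ i : ℕ, ((-1:ℂ)^i * cbin r i) •
        (DR Δ (q + 1 + i) (p + r - i) v
          - (-1:ℂ)^r • TId (DR Δ (p + i) (q + 1 + r - i) v)))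
      = ∑ i ∈ Finset.range (M+1), ((-1:ℂ)^i * cbin r i) •
        (DR Δ (q + 1 + i) (p + r - i) v
          - (-1:ℂ)^r • TId (DR Δ (p + i) (q + 1 + r - i) v)) := by
    refine finsum_eq_range _ (fun i hi => ?_)
    exact tz _ _ _ _ _ _ (key _ i (by omega) (by push_cast; omega))
      (key _ i (by omega) (by push_cast; omega))
  have h3 : (∑ᶠ i : ℕ, ((-1:ℂ)^i * cbin (r+1) i) •
        (DR Δ (q + i) (p + (r+1) - i) v
          - (-1:ℂ)^(r+1) • TId (DR Δ (p + i) (q + (r+1) - i) v)))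
      = ∑ i ∈ Finset.range (M+1), ((-1:ℂ)^i * cbin (r+1) i) •
        (DR Δ (q + i) (p + (r+1) - i) v
          - (-1:ℂ)^(r+1) • TId (DR Δ (p + i) (q + (r+1) - i) v)) := by
    refine finsum_eq_range _ (fun i hi => ?_)
    exact tz _ _ _ _ _ _ (key _ i (by omega) (by push_cast; omega))
      (key _ i (by omega) (by push_cast; omega))
  rw [h1, h2, h3]
  have hG : (fun i : ℕ => DR Δ (q + i) (p + (r+1) - i) v
      - (-1:ℂ)^(r+1) • TId (DR Δ (p + i) (q + (r+1) - i) v)) (M+1) = 0 := by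
    have hX : Δ (p + (r+1) - ((M+1:ℕ):ℤ)) v = 0 :=
      key _ (M+1) (by omega) (by push_cast; omega)
    have hY : Δ (q + (r+1) - ((M+1:ℕ):ℤ)) v = 0 :=
      key _ (M+1) (by omega) (by push_cast; omega)
    simp only []
    rw [DR_zero Δ _ _ v hX, DR_zero Δ _ _ v hY, map_zero, smul_zero, sub_zero]
  have h4 := sum_shift r M (fun i : ℕ => DR Δ (q + i) (p + (r+1) - i) v
      - (-1:ℂ)^(r+1) • TId (DR Δ (p + i) (q + (r+1) - i) v)) hG
  beta_reduce at h4
  rw [h4, ← Finset.sum_add_distrib]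
  apply Finset.sum_congr rfl
  intro i _
  push_cast
  have e1 : p + (r+1) - (i:ℤ) = p + 1 + r - (i:ℤ) := by ring
  have e2 : q + (r+1) - (i:ℤ) = q + 1 + r - (i:ℤ) := by ring
  have e3 : q + ((i:ℤ)+1) = q + 1 + (i:ℤ) := by ring
  have e4 : p + (r+1) - ((i:ℤ)+1) = p + r - (i:ℤ) := by ring
  have e5 : p + ((i:ℤ)+1) = p + 1 + (i:ℤ) := by ring
  have e6 : q + (r+1) - ((i:ℤ)+1) = q + r - (i:ℤ) := by ring
  rw [e1, e2, e3, e4, e5, e6, hz]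
  module

end Aux


theorem coBorcherds_two_of_three (Δ : ℤ → V →ₗ[ℂ] V ⊗[ℂ] V) (htr : Truncation Δ)
    (p q r : ℤ) :
    (CoBorcherds Δ p (q + 1) r → CoBorcherds Δ p q (r + 1) → CoBorcherds Δ (p + 1) q r) ∧
    (CoBorcherds Δ (p + 1) q r → CoBorcherds Δ p q (r + 1) → CoBorcherds Δ p (q + 1) r) ∧
    (CoBorcherds Δ (p + 1) q r → CoBorcherds Δ p (q + 1) r → CoBorcherds Δ p q (r + 1)) := by
  have hL := claimL Δ htr p q r
  have hR := claimR Δ htr p q r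
  refine ⟨?_, ?_, ?_⟩ <;> intro h1 h2 v
  · rw [hL v, h1 v, h2 v]
    exact (hR v).symm
  · have e1 := hL v
    have e2 := hR v
    rw [h1 v, h2 v] at e1
    rw [e2] at e1
    exact add_right_cancel e1.symm
  · have e1 := hL v
    have e2 := hR v
    rw [h1 v, h2 v] at e1
    rw [e2] at e1
    exact (add_left_cancel e1).symm

end
end

section
/- Suppose Δ satisfies truncation, and let D* : V → V be a ℂ-linear map satisfying the D* formula and coefficient Co-Skew symmetry. Then the D*-bracket formula holds: for every m ∈ ℤ, Δ_m ∘ D* − (Id ⊗ D*) ∘ Δ_m = −m · Δ_{m−1} as maps V → V ⊗ V. -/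
open TensorProduct

noncomputable section

variable {V : Type*} [AddCommGroup V] [Module ℂ V]

section AuxLemmas

lemma altA (k : ℕ) : (∑ i ∈ Finset.range (k+1), (-1:ℂ)^i * (k.choose i)) =
    if k = 0 then 1 else 0 := by
  have h := congrArg (Int.cast : ℤ → ℂ) (Int.alternating_sum_range_choose (n := k))
  push_cast at h
  convert h using 2

lemma altB (k : ℕ) (hk : 2 ≤ k) :
    (∑ i ∈ Finset.range (k+1), (-1:ℂ)^i * i * (k.choose i)) = 0 := by
  obtain ⟨n, rfl⟩ : ∃ n, k = n + 2 := ⟨k - 2, by omega⟩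
  rw [Finset.sum_range_succ']
  have key : ∀ i : ℕ, ((i:ℂ)+1) * ((n+2).choose (i+1) : ℂ) = (n+2) * ((n+1).choose i) := by
    intro i
    have hnat : (n+2) * ((n+1).choose i) = ((n+2).choose (i+1)) * (i+1) := by
      simpa [Nat.succ_eq_add_one, show n+1+1 = n+2 from rfl] using Nat.add_one_mul_choose_eq (n+1) i
    have h2 := congrArg (Nat.cast : ℕ → ℂ) hnat
    push_cast at h2
    linear_combination -h2
  have : ∀ i ∈ Finset.range (n+2), (-1:ℂ)^(i+1) * (↑(i+1)) * ((n+2).choose (i+1) : ℂ)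
      = (-(n:ℂ)-2) * ((-1:ℂ)^i * ((n+1).choose i)) := by
    intro i _
    push_cast
    linear_combination (-((-1:ℂ)^i)) * key i
  rw [Finset.sum_congr rfl this, ← Finset.mul_sum]
  have := altA (n+1)
  simp only [Nat.add_eq_zero, if_neg (by omega : ¬ (n+1 = 0))] at this
  simp [this]

lemma alt_coeff (m : ℤ) (k : ℕ) :
    (∑ i ∈ Finset.range (k+1), (-1:ℂ)^(k-i) * ((m:ℂ)+i) * (k.choose i))
      = if k = 0 then (m:ℂ) else if k = 1 then 1 else 0 := by
  match k, (by omega : k = 0 ∨ k = 1 ∨ 2 ≤ k) with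
  | 0, _ => simp
  | 1, _ => norm_num [Finset.sum_range_succ]
  | (k+2), h =>
    have hk : 2 ≤ k + 2 := by omega
    rw [if_neg (by omega), if_neg (by omega)]
    set K := k + 2 with hK
    have step : ∀ i ∈ Finset.range (K+1),
        (-1:ℂ)^(K-i) * ((m:ℂ)+i) * (K.choose i)
          = (-1:ℂ)^K * ((m:ℂ) * ((-1:ℂ)^i * (K.choose i)) + (-1:ℂ)^i * i * (K.choose i)) := by
      intro i hi
      have hi' : i ≤ K := by simpa [Nat.lt_succ_iff] using Finset.mem_range.mp hi
      have hsign : (-1:ℂ)^(K-i) = (-1:ℂ)^K * (-1:ℂ)^i := by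
        have : (-1:ℂ)^K = (-1:ℂ)^(K-i) * (-1:ℂ)^i := by
          rw [← pow_add, Nat.sub_add_cancel hi']
        rw [this, mul_assoc, ← pow_add, ← two_mul, pow_mul]
        norm_num
      rw [hsign]; ring
    rw [Finset.sum_congr rfl step, ← Finset.mul_sum, Finset.sum_add_distrib,
      ← Finset.mul_sum, altA K, altB K hk, if_neg (by omega)]
    ring

variable {V : Type*} [AddCommGroup V] [Module ℂ V]

lemma Tflip_Tflip (x : V ⊗[ℂ] V) : Tflip (Tflip x) = x := by
  induction x using TensorProduct.induction_on with
  | zero => simp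
  | tmul u w => simp [Tflip]
  | add a b ha hb => simp [map_add, ha, hb]

lemma map_id_D (D : V →ₗ[ℂ] V) (x : V ⊗[ℂ] V) :
    TensorProduct.map LinearMap.id D x =
      Tflip (TensorProduct.map D LinearMap.id (Tflip x)) := by
  induction x using TensorProduct.induction_on with
  | zero => simp
  | tmul u w => simp [Tflip]
  | add a b ha hb => simp [map_add, ha, hb]

lemma dpow_zero' (D : V →ₗ[ℂ] V) : dpow D 0 = LinearMap.id := by
  simp [dpow]; rfl

lemma dpow_one' (D : V →ₗ[ℂ] V) : dpow D 1 = D := by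
  simp [dpow]

lemma dpow_dpow (D : V →ₗ[ℂ] V) (i j : ℕ) (v : V) :
    dpow D j (dpow D i v) = ((i + j).choose i : ℂ) • dpow D (i + j) v := by
  have hfac : ((i + j).choose i : ℂ) * (i.factorial * j.factorial) = (i+j).factorial := by
    have := Nat.choose_mul_factorial_mul_factorial (Nat.le_add_right i j)
    rw [Nat.add_sub_cancel_left] at this
    push_cast [← this]; ring
  have hDp : (D ^ j) ((D ^ i) v) = (D ^ (i + j)) v := by
    rw [add_comm i j, pow_add, Module.End.mul_apply]
  simp only [dpow, LinearMap.smul_apply, map_smul, hDp, smul_smul]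
  congr 1
  have h1 : (i.factorial : ℂ) ≠ 0 := Nat.cast_ne_zero.2 i.factorial_ne_zero
  have h2 : (j.factorial : ℂ) ≠ 0 := Nat.cast_ne_zero.2 j.factorial_ne_zero
  have h3 : ((i+j).factorial : ℂ) ≠ 0 := Nat.cast_ne_zero.2 (i+j).factorial_ne_zero
  field_simp
  linear_combination -hfac

lemma sign_zpow (a : ℤ) (j : ℕ) :
    (-1:ℂ)^(a+1) * (-1:ℂ)^(a+(j:ℤ)) = -((-1:ℂ)^j) := by
  have hne : (-1:ℂ) ≠ 0 := by norm_num
  rw [← zpow_add₀ hne]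
  have : a + 1 + (a + (j:ℤ)) = 2*a + (1 + (j:ℤ)) := by ring
  rw [this, zpow_add₀ hne, zpow_mul, zpow_add₀ hne]
  simp [zpow_natCast]

end AuxLemmas

theorem dstBracket_of_coSkew (Δ : ℤ → V →ₗ[ℂ] V ⊗[ℂ] V) (htr : Truncation Δ)
    (D : V →ₗ[ℂ] V) (hD : DstFormula Δ D) (hsk : CoSkew Δ D) :
    ∀ m : ℤ,
      Δ m ∘ₗ D - TensorProduct.map LinearMap.id D ∘ₗ Δ m = (-(m : ℂ)) • Δ (m - 1) := by
  classical
  intro m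
  ext v
  -- finiteness data
  have hgfin := (hsk m v).1
  have hffin := (hsk (m-1) v).1
  set F : Finset ℕ := hgfin.toFinset ∪ hffin.toFinset with hF
  set M : ℕ := F.sup id + 2 with hM
  have hM2 : 2 ≤ M := by omega
  have hgM : ∀ i : ℕ, M ≤ i → Δ (m + (i:ℤ)) (dpow D i v) = 0 := by
    intro i hi
    by_contra hne
    have hmem : i ∈ F := Finset.mem_union_left _ (hgfin.mem_toFinset.2 hne)
    have := Finset.le_sup (f := id) hmem
    simp only [id] at this
    omega
  have hfM : ∀ k : ℕ, M ≤ k → Δ (m - 1 + (k:ℤ)) (dpow D k v) = 0 := by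
    intro k hk
    by_contra hne
    have hmem : k ∈ F := Finset.mem_union_right _ (hffin.mem_toFinset.2 hne)
    have := Finset.le_sup (f := id) hmem
    simp only [id] at this
    omega
  -- Step A : expand T(Δ m v) as a finite sum
  have hA : Tflip (Δ m v) = ∑ i ∈ Finset.range M,
      (-1:ℂ)^(m+1+(i:ℤ)) • Δ (m + (i:ℤ)) (dpow D i v) := by
    rw [(hsk m v).2]
    apply finsum_eq_sum_of_support_subset
    intro i hi
    simp only [Function.mem_support] at hi
    simp only [Finset.coe_range, Set.mem_Iio]
    by_contra hlt
    exact hi (by rw [hgM i (by omega)]; simp)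
  -- Step B : express (Id ⊗ D)(Δ m v)
  have hB : TensorProduct.map LinearMap.id D (Δ m v)
      = ∑ i ∈ Finset.range M, (-1:ℂ)^(m+1+(i:ℤ)) •
          Tflip (TensorProduct.map D LinearMap.id (Δ (m + (i:ℤ)) (dpow D i v))) := by
    rw [map_id_D, hA, map_sum, map_sum]
    simp only [map_smul]
  -- Step C : expand each term
  have hC : ∀ i : ℕ, ((-1:ℂ)^(m+1+(i:ℤ))) •
        Tflip (TensorProduct.map D LinearMap.id (Δ (m + (i:ℤ)) (dpow D i v)))
      = ∑ j ∈ Finset.range M, (((m:ℂ)+(i:ℕ)) * (-1:ℂ)^j * ((i+j).choose i : ℂ)) •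
          Δ (m-1+((i+j:ℕ):ℤ)) (dpow D (i+j) v) := by
    intro i
    have h1 : TensorProduct.map D LinearMap.id (Δ (m + (i:ℤ)) (dpow D i v))
        = (-(((m + (i:ℤ)) : ℤ) : ℂ)) • Δ (m + (i:ℤ) - 1) (dpow D i v) := by
      have h := congrArg (fun L => L (dpow D i v)) (hD (m + (i:ℤ)))
      simpa using h
    have h3 : ∀ j : ℕ,
        ((-1:ℂ)^((m + (i:ℤ) - 1) + 1 + (j:ℤ))) •
            Δ ((m + (i:ℤ) - 1) + (j:ℤ)) (dpow D j (dpow D i v))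
          = ((-1:ℂ)^((m + (i:ℤ)) + (j:ℤ)) * ((i+j).choose i : ℂ)) •
            Δ (m - 1 + ((i+j : ℕ):ℤ)) (dpow D (i+j) v) := by
      intro j
      rw [dpow_dpow, map_smul,
        show (m + (i:ℤ) - 1) + (j:ℤ) = m - 1 + ((i+j:ℕ):ℤ) by push_cast; ring,
        show (m + (i:ℤ) - 1) + 1 + (j:ℤ) = (m + (i:ℤ)) + (j:ℤ) by ring, smul_smul]
    have h2 := (hsk (m + (i:ℤ) - 1) (dpow D i v)).2
    simp only [h3] at h2
    have h4 : (∑ᶠ j : ℕ, ((-1:ℂ)^((m+(i:ℤ))+(j:ℤ)) * ((i+j).choose i:ℂ)) •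
          Δ (m-1+((i+j:ℕ):ℤ)) (dpow D (i+j) v))
        = ∑ j ∈ Finset.range M, ((-1:ℂ)^((m+(i:ℤ))+(j:ℤ)) * ((i+j).choose i:ℂ)) •
          Δ (m-1+((i+j:ℕ):ℤ)) (dpow D (i+j) v) := by
      apply finsum_eq_sum_of_support_subset
      intro j hj
      simp only [Function.mem_support] at hj
      simp only [Finset.coe_range, Set.mem_Iio]
      by_contra hlt
      exact hj (by rw [hfM (i+j) (by omega)]; simp)
    rw [h1, map_smul, h2, h4, Finset.smul_sum, Finset.smul_sum]
    refine Finset.sum_congr rfl (fun j _ => ?_)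
    rw [smul_smul, smul_smul]
    congr 1
    have hs := sign_zpow (m+(i:ℤ)) j
    have hc : (((m + (i:ℤ)) : ℤ) : ℂ) = (m:ℂ) + (i:ℕ) := by push_cast; ring
    rw [show m+1+(i:ℤ) = (m+(i:ℤ))+1 by ring, hc]
    linear_combination (-(((m:ℂ)+(i:ℕ)) * ((i+j).choose i : ℂ))) * hs
  -- Step D : double sum
  have hE : TensorProduct.map LinearMap.id D (Δ m v)
      = ∑ i ∈ Finset.range M, ∑ j ∈ Finset.range M,
          (((m:ℂ)+(i:ℕ)) * (-1:ℂ)^j * ((i+j).choose i : ℂ)) •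
            Δ (m-1+((i+j:ℕ):ℤ)) (dpow D (i+j) v) := by
    rw [hB]
    exact Finset.sum_congr rfl (fun i _ => hC i)
  -- Step E : shrink inner sums and flip the diagonal
  have hshrink : ∀ i ∈ Finset.range M,
      (∑ j ∈ Finset.range M, (((m:ℂ)+(i:ℕ)) * (-1:ℂ)^j * ((i+j).choose i : ℂ)) •
          Δ (m-1+((i+j:ℕ):ℤ)) (dpow D (i+j) v))
        = ∑ j ∈ Finset.range (M - i), (((m:ℂ)+(i:ℕ)) * (-1:ℂ)^j * ((i+j).choose i : ℂ)) •
          Δ (m-1+((i+j:ℕ):ℤ)) (dpow D (i+j) v) := by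
    intro i _
    symm
    apply Finset.sum_subset (Finset.range_subset_range.2 (Nat.sub_le M i))
    intro j hj hj'
    simp only [Finset.mem_range] at hj hj'
    rw [hfM (i+j) (by omega)]
    simp
  have hflip := Finset.sum_range_diag_flip M (fun i j =>
      (((m:ℂ)+(i:ℕ)) * (-1:ℂ)^j * ((i+j).choose i : ℂ)) •
        Δ (m-1+((i+j:ℕ):ℤ)) (dpow D (i+j) v))
  have hE2 : TensorProduct.map LinearMap.id D (Δ m v)
      = ∑ k ∈ Finset.range M, ∑ i ∈ Finset.range (k+1),
          (((m:ℂ)+(i:ℕ)) * (-1:ℂ)^(k-i) * ((i+(k-i)).choose i : ℂ)) •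
            Δ (m-1+((i+(k-i):ℕ):ℤ)) (dpow D (i+(k-i)) v) := by
    rw [hE, Finset.sum_congr rfl hshrink, ← hflip]
  -- Step F : evaluate the inner sums via the binomial identity
  have hdiag : ∀ k ∈ Finset.range M,
      (∑ i ∈ Finset.range (k+1),
          (((m:ℂ)+(i:ℕ)) * (-1:ℂ)^(k-i) * ((i+(k-i)).choose i : ℂ)) •
            Δ (m-1+((i+(k-i):ℕ):ℤ)) (dpow D (i+(k-i)) v))
        = (if k = 0 then (m:ℂ) else if k = 1 then 1 else 0) •
            Δ (m-1+(k:ℤ)) (dpow D k v) := by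
    intro k _
    rw [← alt_coeff m k, Finset.sum_smul]
    refine Finset.sum_congr rfl (fun i hi => ?_)
    have hik : i + (k - i) = k := by
      simp only [Finset.mem_range, Nat.lt_succ_iff] at hi
      omega
    rw [hik]
    congr 1
    ring
  have hE3 : TensorProduct.map LinearMap.id D (Δ m v)
      = (m:ℂ) • Δ (m-1) v + Δ m (D v) := by
    rw [hE2, Finset.sum_congr rfl hdiag,
      ← Finset.sum_subset (show ({0,1} : Finset ℕ) ⊆ Finset.range M by
        intro x hx
        simp only [Finset.mem_insert, Finset.mem_singleton] at hx
        rcases hx with rfl | rfl <;> simp only [Finset.mem_range] <;> omega)]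
    · rw [Finset.sum_pair (by norm_num : (0:ℕ) ≠ 1)]
      have e0 : m - 1 + ((0:ℕ):ℤ) = m - 1 := by push_cast; ring
      have e1 : m - 1 + ((1:ℕ):ℤ) = m := by push_cast; ring
      rw [e0, e1]
      norm_num
      rw [show dpow D 0 v = v by rw [dpow_zero']; rfl,
        show dpow D 1 v = D v by rw [dpow_one']]
    · intro k hk hk2
      simp only [Finset.mem_insert, Finset.mem_singleton, not_or] at hk2
      rw [if_neg hk2.1, if_neg hk2.2, zero_smul]
  -- conclude
  simp only [LinearMap.sub_apply, LinearMap.comp_apply, LinearMap.smul_apply]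
  rw [hE3]
  module

end
end

section
/- Let (V, Δ, c) be a vertex coalgebra (coefficient form) and set D* := (Id ⊗ c) ∘ Δ_{−2}. Then for every m ∈ ℤ, Δ_m ∘ D* − (Id ⊗ D*) ∘ Δ_m = −m · Δ_{m−1} as maps V → V ⊗ V. -/
open TensorProduct

noncomputable section

variable {V : Type*} [AddCommGroup V] [Module ℂ V]

lemma cbin_zero_left {i : ℕ} (hi : i ≠ 0) : cbin 0 i = 0 := by
  unfold cbin
  rw [Finset.prod_eq_zero (Finset.mem_range.2 (Nat.pos_of_ne_zero hi)) (by simp)]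
  simp

lemma E_assoc (c : V →ₗ[ℂ] ℂ) (f : V →ₗ[ℂ] V ⊗[ℂ] V) :
    (TensorProduct.map LinearMap.id (IdC c)) ∘ₗ
      (TensorProduct.assoc ℂ V V V).toLinearMap ∘ₗ TensorProduct.map f LinearMap.id
    = f ∘ₗ IdC c := by
  apply TensorProduct.ext'
  intro x y
  simp only [IdC, LinearMap.comp_apply, TensorProduct.map_tmul, LinearMap.id_apply,
    LinearEquiv.coe_coe, TensorProduct.rid_tmul, map_smul]
  induction f x using TensorProduct.induction_on with
  | zero => simp
  | tmul a b => simp [TensorProduct.tmul_smul, TensorProduct.smul_tmul']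
  | add u w hu hw => simp [hu, hw, TensorProduct.add_tmul]

lemma E_DL (Δ : ℤ → V →ₗ[ℂ] V ⊗[ℂ] V) (c : V →ₗ[ℂ] ℂ) (n m : ℤ) (v : V) :
    TensorProduct.map LinearMap.id (IdC c) (DL Δ n m v) = Δ n (IdC c (Δ m v)) := by
  have := LinearMap.congr_fun (E_assoc c (Δ n)) (Δ m v)
  simpa [DL, LinearMap.comp_apply] using this

lemma E_DR (Δ : ℤ → V →ₗ[ℂ] V ⊗[ℂ] V) (c : V →ₗ[ℂ] ℂ) (n m : ℤ) (v : V) :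
    TensorProduct.map LinearMap.id (IdC c) (DR Δ n m v)
      = TensorProduct.map LinearMap.id (IdC c ∘ₗ Δ n) (Δ m v) := by
  have : TensorProduct.map (LinearMap.id (M := V)) (IdC c) ∘ₗ
      TensorProduct.map LinearMap.id (Δ n)
      = TensorProduct.map LinearMap.id (IdC c ∘ₗ Δ n) := by
    rw [← TensorProduct.map_comp, LinearMap.id_comp]
  calc TensorProduct.map LinearMap.id (IdC c) (DR Δ n m v)
      = (TensorProduct.map (LinearMap.id (M := V)) (IdC c) ∘ₗ
          TensorProduct.map LinearMap.id (Δ n)) (Δ m v) := by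
        simp [DR, LinearMap.comp_apply]
    _ = TensorProduct.map LinearMap.id (IdC c ∘ₗ Δ n) (Δ m v) := by rw [this]

lemma E_TId (c : V →ₗ[ℂ] ℂ) (w : V ⊗[ℂ] (V ⊗[ℂ] V)) :
    TensorProduct.map LinearMap.id (IdC c) (TId w)
      = Tflip (TensorProduct.map (LinearMap.id (M := V)) (IdC c) w) := by
  have : (TensorProduct.map LinearMap.id (IdC c)) ∘ₗ TId
      = Tflip ∘ₗ TensorProduct.map (LinearMap.id (M := V)) (IdC c) := by
    apply TensorProduct.ext'
    intro x u
    induction u using TensorProduct.induction_on with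
    | zero => simp
    | tmul a b =>
        simp [TId, Tflip, IdC, TensorProduct.tmul_smul, TensorProduct.smul_tmul']
    | add u w hu hw => simp only [TensorProduct.tmul_add, map_add, hu, hw]
  exact LinearMap.congr_fun this w

theorem dstBracket_of_vertexCoalgebra (Δ : ℤ → V →ₗ[ℂ] V ⊗[ℂ] V) (c : V →ₗ[ℂ] ℂ)
    (hcu : LeftCounit Δ c) (hcc : Cocreation Δ c) (htr : Truncation Δ)
    (hB : ∀ p q r : ℤ, CoBorcherds Δ p q r) :
    ∀ m : ℤ,
      Δ m ∘ₗ (IdC c ∘ₗ Δ (-2)) -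
          TensorProduct.map LinearMap.id (IdC c ∘ₗ Δ (-2)) ∘ₗ Δ m =
        (-(m : ℂ)) • Δ (m - 1) := by
  intro m
  ext v
  simp only [LinearMap.sub_apply, LinearMap.comp_apply, LinearMap.smul_apply]
  obtain ⟨N, hN⟩ := htr v
  set f : ℕ → V ⊗[ℂ] (V ⊗[ℂ] V) := fun i =>
    ((-1 : ℂ) ^ i * cbin m i) •
      (DR Δ (-2 + i) (0 + m - i) v -
        (-1 : ℂ) ^ m • TId (DR Δ (0 + i) (-2 + m - i) v)) with hf
  have h : DL Δ m (-2) v = ∑ᶠ i : ℕ, f i := by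
    have hL : (∑ᶠ i : ℕ, cbin 0 i • DL Δ (m + i) (0 + -2 - i) v) = DL Δ m (-2) v := by
      rw [finsum_eq_single _ 0 (fun i hi => by rw [cbin_zero_left hi, zero_smul])]
      norm_num [cbin]
    rw [← hL]
    exact hB 0 (-2) m v
  have hsupp : (Function.support f).Finite := by
    apply Set.Finite.subset (Finset.range (m - N).toNat).finite_toSet
    intro i hi
    by_contra hmem
    apply hi
    have h1 : (m - N : ℤ) ≤ i := by
      refine le_trans (Int.self_le_toNat _) ?_
      exact_mod_cast Nat.le_of_not_lt (fun h => hmem (Finset.mem_coe.2 (Finset.mem_range.2 h)))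
    have e1 : Δ (m - i) v = 0 := hN _ (by omega)
    have e2 : Δ (-2 + m - i) v = 0 := hN _ (by omega)
    simp [hf, DR, e1, e2, show (0 : ℤ) + m - (i : ℤ) = m - i from by ring]
  have h2 := congrArg (TensorProduct.map (LinearMap.id (M := V)) (IdC c)) h
  have h3 : (TensorProduct.map (LinearMap.id (M := V)) (IdC c)) (∑ᶠ i : ℕ, f i)
      = ∑ᶠ i : ℕ, (TensorProduct.map (LinearMap.id (M := V)) (IdC c)) (f i) :=
    (TensorProduct.map (LinearMap.id (M := V)) (IdC c)).toAddMonoidHom.map_finsum hsupp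
  rw [E_DL, h3] at h2
  have hterm : ∀ i : ℕ,
      (TensorProduct.map (LinearMap.id (M := V)) (IdC c)) (f i)
        = ((-1 : ℂ) ^ i * cbin m i) •
            TensorProduct.map LinearMap.id (IdC c ∘ₗ Δ (-2 + i)) (Δ (0 + m - i) v) := by
    intro i
    have hz : IdC c ∘ₗ Δ (0 + (i : ℤ)) = 0 := hcc.1 _ (by positivity)
    simp only [hf, map_smul, map_sub, E_DR, E_TId, hz,
      TensorProduct.map_zero_right, LinearMap.zero_apply, map_zero, smul_zero, sub_zero]
  rw [finsum_congr hterm] at h2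
  have hsupp2 : (Function.support fun i : ℕ =>
      ((-1 : ℂ) ^ i * cbin m i) •
        TensorProduct.map LinearMap.id (IdC c ∘ₗ Δ (-2 + i)) (Δ (0 + m - i) v)) ⊆
      (({0, 1} : Finset ℕ) : Set ℕ) := by
    intro i hi
    by_contra hmem
    apply hi
    have hi2 : 2 ≤ i := by
      rcases i with _ | _ | i
      · exact absurd (by simp) hmem
      · exact absurd (by simp) hmem
      · omega
    have hz : IdC c ∘ₗ Δ (-2 + i) = 0 := hcc.1 _ (by omega)
    simp [hz]
  rw [finsum_eq_sum_of_support_subset _ hsupp2] at h2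
  have hsum : ∑ i ∈ ({0, 1} : Finset ℕ),
      ((-1 : ℂ) ^ i * cbin m i) •
        TensorProduct.map LinearMap.id (IdC c ∘ₗ Δ (-2 + i)) (Δ (0 + m - i) v)
      = TensorProduct.map LinearMap.id (IdC c ∘ₗ Δ (-2)) (Δ m v) +
        (-(m : ℂ)) • Δ (m - 1) v := by
    rw [Finset.sum_pair (by norm_num)]
    congr 1
    · norm_num [cbin]
    · have : ((-2 : ℤ) + (1 : ℕ)) = -1 := by norm_num
      rw [this, hcc.2, TensorProduct.map_id]
      have hone : cbin m 1 = (m : ℂ) := by simp [cbin]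
      have : ((0 : ℤ) + m - (1 : ℕ)) = m - 1 := by norm_num
      rw [this, hone]
      norm_num
  rw [hsum] at h2
  rw [h2]
  abel


end
end
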